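/- arXiv:1903.00554 — 7 statements merged into one kernel-verified Lean document; each statement's English description precedes it below -/
import Mathlib

section
/- If r is a vertex with no pebbles in a configuration C on a connected graph G, and the potential of C (the maximum number of pairwise disjoint pairs of pebbles sitting on common vertices) is strictly less than t, then C is not t-fold r-solvable. -/
open SimpleGraph

open Classical in
/-- A single pebbling step: remove two pebbles from `u` and add one to an adjacent `v`. -/
def PebStep {V : Type*} (G : SimpleGraph V) (C C' : V → ℕ) : Prop :=
  ∃ u v, G.Adj u v ∧ 2 ≤ C u ∧
    ∀ w, C' w = if w = u then C w - 2 else if w = v then C w + 1 else C w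

/-- `C` is `t`-fold `r`-solvable: some sequence of pebbling steps places `t` pebbles on `r`. -/
def Solvable {V : Type*} (G : SimpleGraph V) (C : V → ℕ) (r : V) (t : ℕ) : Prop :=
  ∃ C', Relation.ReflTransGen (PebStep G) C C' ∧ t ≤ C' r

/-- The size of a configuration: total number of pebbles. -/
def confSize {V : Type*} [Fintype V] (C : V → ℕ) : ℕ := ∑ v, C v

/-- The potential of a configuration: the number of pairwise disjoint pairs of
pebbles sitting on common vertices, `∑ v, ⌊C v / 2⌋`. -/
def potential {V : Type*} [Fintype V] (C : V → ℕ) : ℕ := ∑ v, C v / 2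

/-- Number of vertices with no pebbles. -/
noncomputable def numZeros {V : Type*} [Fintype V] (C : V → ℕ) : ℕ :=
  {v : V | C v = 0}.ncard

/-- The `t`-pebbling number of `G` with root `r`. -/
noncomputable def piT {V : Type*} [Fintype V] (G : SimpleGraph V) (r : V) (t : ℕ) : ℕ :=
  sInf {m | ∀ C : V → ℕ, m ≤ confSize C → Solvable G C r t}

/-- The `t`-pebbling number of `G`. -/
noncomputable def piTG {V : Type*} [Fintype V] (G : SimpleGraph V) (t : ℕ) : ℕ :=
  Finset.univ.sup fun r => piT G r t

/-- `G` is `k`-connected: more than `k` vertices and deleting fewer than `k`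
vertices leaves a connected graph. -/
def KConnected {V : Type*} [Fintype V] (G : SimpleGraph V) (k : ℕ) : Prop :=
  k < Fintype.card V ∧
    ∀ S : Set V, S.ncard < k → ((⊤ : G.Subgraph).deleteVerts S).coe.Connected

/-- `u` is a universal vertex: adjacent to every other vertex. -/
def IsUniversal {V : Type*} (G : SimpleGraph V) (u : V) : Prop :=
  ∀ v, v ≠ u → G.Adj u v

/-!
Count a pebble on the root as a full unit and every other vertex by its number of potential
moves. A pebbling step `u → v` spends one potential move at `u` (or, if `u = r`, two pebbles
on the root) and raises the count at `v` by at most one, so this rooted potential never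
increases. It bounds the number of pebbles on `r` from above, and it equals `potential C`
when `r` carries no pebbles.
-/

open Classical in
noncomputable def rootedPotential {V : Type*} [Fintype V] (r : V) (C : V → ℕ) : ℕ :=
  ∑ w, if w = r then C w else C w / 2

section rootedPotential

variable {V : Type*} [Fintype V] {G : SimpleGraph V} {r : V} {C C' : V → ℕ}

theorem le_rootedPotential : C r ≤ rootedPotential r C := by
  classical
  simpa [rootedPotential] using
    Finset.single_le_sum (f := fun w => if w = r then C w else C w / 2)
      (fun _ _ => Nat.zero_le _) (Finset.mem_univ r)

theorem rootedPotential_eq_potential (hr : C r = 0) : rootedPotential r C = potential C := by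
  classical
  refine Finset.sum_congr rfl fun w _ => ?_
  split_ifs with hw
  · simp [hw, hr]
  · rfl

theorem rootedPotential_le_of_pebStep (h : PebStep G C C') :
    rootedPotential r C' ≤ rootedPotential r C := by
  classical
  obtain ⟨u, v, huv, h2, hC'⟩ := h
  let weight : V → ℕ → ℕ := fun w n => if w = r then n else n / 2
  -- Each correction term sums to `1` over all vertices, so they cancel after summing.
  have pointwise : ∀ w, weight w (C' w) + (if w = u then 1 else 0)
      ≤ weight w (C w) + (if w = v then 1 else 0) := by
    intro w
    rw [hC' w]
    by_cases hwu : w = u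
    · subst hwu
      simp only [weight, if_true, if_neg huv.ne]
      split_ifs <;> omega
    · by_cases hwv : w = v
      · subst hwv
        simp only [weight, if_neg hwu, if_true]
        split_ifs <;> omega
      · simp [weight, hwu, hwv]
  have hsum := Finset.sum_le_sum fun w (_ : w ∈ Finset.univ) => pointwise w
  simp only [Finset.sum_add_distrib, Finset.sum_ite_eq', Finset.mem_univ, if_true] at hsum
  exact Nat.le_of_add_le_add_right hsum

theorem rootedPotential_le_of_reflTransGen (h : Relation.ReflTransGen (PebStep G) C C') :
    rootedPotential r C' ≤ rootedPotential r C := by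
  induction h with
  | refl => exact le_rfl
  | tail _ hstep ih => exact (rootedPotential_le_of_pebStep hstep).trans ih

end rootedPotential

theorem potential_lt_not_solvable_general {V : Type*} [Fintype V] (G : SimpleGraph V)
    (C : V → ℕ) (r : V) (t : ℕ)
    (hr : C r = 0) (hpot : potential C < t) :
    ¬ Solvable G C r t := by
  rintro ⟨C', hreach, ht⟩
  have : C' r < t := calc
    C' r ≤ rootedPotential r C' := le_rootedPotential
    _ ≤ rootedPotential r C := rootedPotential_le_of_reflTransGen hreach
    _ = potential C := rootedPotential_eq_potential hr
    _ < t := hpot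
  exact this.not_ge ht

theorem potential_lt_not_solvable {V : Type*} [Fintype V] (G : SimpleGraph V)
    (hG : G.Connected) (C : V → ℕ) (r : V) (t : ℕ)
    (hr : C r = 0) (hpot : potential C < t) :
    ¬ Solvable G C r t :=
  potential_lt_not_solvable_general G C r t hr hpot
end

section
/- Let G be a graph with root vertex r, let C be a t-fold r-solvable configuration on G, and suppose y ≠ r is a vertex with C(y) = 0 whose open neighborhood is contained in the closed neighborhood of some other vertex x. Then the restriction of C to G − y is t-fold r-solvable in G − y. -/
open SimpleGraph

theorem junior_removal {V : Type*} (G : SimpleGraph V) (r x y : V) (t : ℕ)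
    (C : V → ℕ) (hyr : y ≠ r) (hyx : y ≠ x) (hy0 : C y = 0)
    (hjun : ∀ v, G.Adj y v → v ∈ G.neighborSet x ∪ {x})
    (hsolv : Solvable G C r t) :
    Solvable (G.induce {v : V | v ≠ y}) (fun v => C v) ⟨r, hyr.symm⟩ t := by
  classical
  obtain ⟨C', hsteps, hCr⟩ := hsolv
  set G' := G.induce {v : V | v ≠ y} with hG'
  let Inv : (V → ℕ) → ({v : V | v ≠ y} → ℕ) → Prop := fun A D =>
    (∀ v (hv : v ≠ y), v ≠ x → A v ≤ D ⟨v, hv⟩) ∧ A x + A y ≤ D ⟨x, hyx.symm⟩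
  have hstep : ∀ A B, PebStep G A B → ∀ D, Inv A D →
      ∃ D', Relation.ReflTransGen (PebStep G') D D' ∧ Inv B D' := by
    rintro A B ⟨u, v, hadj, h2, hB⟩ D ⟨hD1, hD2⟩
    have hne : u ≠ v := hadj.ne
    by_cases huy : u = y
    · -- step out of y : 2 ≤ A y
      have hvy : ¬ v = y := fun h => hne (huy.trans h.symm)
      have hv : v ∈ G.neighborSet x ∪ {x} := hjun v (huy ▸ hadj)
      have h2y : 2 ≤ A y := huy ▸ h2
      by_cases hvx : v = x
      · -- move y → x : do nothing
        refine ⟨D, .refl, fun w hw hwx => ?_, ?_⟩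
        · have h1 := hD1 w hw hwx
          have hb := hB w
          rw [if_neg (fun h => hw (h.trans huy)),
            if_neg (fun h => hwx (h.trans hvx))] at hb
          omega
        · have hbx := hB x
          have hby := hB y
          rw [if_neg (fun h => hyx (h.trans huy).symm), if_pos hvx.symm] at hbx
          rw [if_pos huy.symm] at hby
          omega
      · -- move y → v with v ≠ x, v ≠ y : simulate x → v
        have hax : G.Adj x v := by
          rcases hv with hax | hveq
          · exact hax
          · exact absurd hveq hvx
        have h2' : 2 ≤ D ⟨x, hyx.symm⟩ := by omega
        refine ⟨_, Relation.ReflTransGen.single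
          ⟨⟨x, hyx.symm⟩, ⟨v, hvy⟩, hax, h2', fun w => rfl⟩, ?_, ?_⟩
        · intro w hw hwx
          have h1 := hD1 w hw hwx
          have hb := hB w
          rw [if_neg (fun h => hw (h.trans huy))] at hb
          simp only [Subtype.mk.injEq]
          rw [if_neg hwx]
          by_cases hwv : w = v
          · rw [if_pos hwv] at hb
            rw [if_pos hwv]
            omega
          · rw [if_neg hwv] at hb
            rw [if_neg hwv]
            omega
        · have hbx := hB x
          have hby := hB y
          rw [if_neg (fun h => hyx (h.trans huy).symm),
            if_neg (fun h => hvx h.symm)] at hbx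
          rw [if_pos huy.symm] at hby
          simp only [Subtype.mk.injEq]
          rw [if_pos trivial]
          omega
    · by_cases hvy : v = y
      · -- step into y
        have hu : u ∈ G.neighborSet x ∪ {x} := hjun u (hvy ▸ hadj).symm
        by_cases hux : u = x
        · -- x → y : do nothing
          have h2x : 2 ≤ A x := hux ▸ h2
          refine ⟨D, .refl, fun w hw hwx => ?_, ?_⟩
          · have h1 := hD1 w hw hwx
            have hb := hB w
            rw [if_neg (fun h => hwx (h.trans hux)),
              if_neg (fun h => hw (h.trans hvy))] at hb
            omega
          · have hbx := hB x
            have hby := hB y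
            rw [if_pos hux.symm] at hbx
            rw [if_neg (fun h => huy h.symm), if_pos hvy.symm] at hby
            omega
        · -- u → y with u ≠ x, u ≠ y : simulate u → x
          have hax : G.Adj x u := by
            rcases hu with hax | hueq
            · exact hax
            · exact absurd hueq hux
          have h2' : 2 ≤ D ⟨u, huy⟩ := le_trans h2 (hD1 u huy hux)
          refine ⟨_, Relation.ReflTransGen.single
            ⟨⟨u, huy⟩, ⟨x, hyx.symm⟩, hax.symm, h2', fun w => rfl⟩, ?_, ?_⟩
          · intro w hw hwx
            have h1 := hD1 w hw hwx
            have hb := hB w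
            simp only [Subtype.mk.injEq]
            by_cases hwu : w = u
            · rw [if_pos hwu] at hb
              rw [if_pos hwu]
              omega
            · rw [if_neg hwu, if_neg (fun h => hw (h.trans hvy))] at hb
              rw [if_neg hwu, if_neg hwx]
              omega
          · have hbx := hB x
            have hby := hB y
            rw [if_neg (fun h => hux h.symm),
              if_neg (fun h => hyx (h.trans hvy).symm)] at hbx
            rw [if_neg (fun h => huy h.symm), if_pos hvy.symm] at hby
            simp only [Subtype.mk.injEq]
            rw [if_neg (fun h => hux h.symm), if_pos trivial]
            omega
      · -- ordinary step u → v, both ≠ y : same step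
        have h2' : 2 ≤ D ⟨u, huy⟩ := by
          by_cases hux : u = x
          · have h2x : 2 ≤ A x := hux ▸ h2
            have : D ⟨u, huy⟩ = D ⟨x, hyx.symm⟩ := congrArg D (Subtype.ext hux)
            omega
          · exact le_trans h2 (hD1 u huy hux)
        refine ⟨_, Relation.ReflTransGen.single
          ⟨⟨u, huy⟩, ⟨v, hvy⟩, hadj, h2', fun w => rfl⟩, ?_, ?_⟩
        · intro w hw hwx
          have h1 := hD1 w hw hwx
          have hb := hB w
          simp only [Subtype.mk.injEq]
          by_cases hwu : w = u
          · rw [if_pos hwu] at hb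
            rw [if_pos hwu]
            omega
          · rw [if_neg hwu] at hb
            rw [if_neg hwu]
            by_cases hwv : w = v
            · rw [if_pos hwv] at hb
              rw [if_pos hwv]
              omega
            · rw [if_neg hwv] at hb
              rw [if_neg hwv]
              omega
        · have hbx := hB x
          have hby := hB y
          rw [if_neg (fun h => huy h.symm), if_neg (fun h => hvy h.symm)] at hby
          simp only [Subtype.mk.injEq]
          by_cases hxu : x = u
          · have h2x : 2 ≤ A x := by rw [hxu]; exact h2
            rw [if_pos hxu] at hbx
            rw [if_pos hxu]
            omega
          · rw [if_neg hxu] at hbx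
            rw [if_neg hxu]
            by_cases hxv : x = v
            · rw [if_pos hxv] at hbx
              rw [if_pos hxv]
              omega
            · rw [if_neg hxv] at hbx
              rw [if_neg hxv]
              omega
  have key : ∀ B, Relation.ReflTransGen (PebStep G) C B →
      ∃ D, Relation.ReflTransGen (PebStep G') (fun v => C v) D ∧ Inv B D := by
    intro B h
    induction h with
    | refl => exact ⟨_, .refl, fun v hv hvx => le_refl _, by simp [hy0]⟩
    | tail _ hs ih =>
      obtain ⟨D, hD, hinv⟩ := ih
      obtain ⟨D', hD', hinv'⟩ := hstep _ _ hs D hinv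
      exact ⟨D', hD.trans hD', hinv'⟩
  obtain ⟨D, hD, hinv⟩ := key C' hsteps
  refine ⟨D, hD, ?_⟩
  by_cases hrx : r = x
  · have h2 := hinv.2
    have hDeq : D ⟨r, hyr.symm⟩ = D ⟨x, hyx.symm⟩ := congrArg D (Subtype.ext hrx)
    rw [hrx] at hCr
    omega
  · exact le_trans hCr (hinv.1 r hyr.symm hrx)
end

section
/- Let G be a graph on n vertices with a universal vertex u. If C is the configuration that places 0 pebbles on u and an odd number of pebbles on every other vertex, with total size n + 2t − 3, then C is not t-fold u-solvable. Consequently π_t(G, u) ≥ n + 2t − 2. -/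
open SimpleGraph

/-! The potential `C u + ∑_{v ≠ u} ⌊C v / 2⌋` never increases under a pebbling step, and it
bounds the number of pebbles that can ever sit on `u`. Odd piles waste one pebble each, so the
odd configuration of size `n + 2t - 3` has potential only `t - 1`. Conversely, when `u` is
universal, every configuration of potential at least `t` is `t`-fold `u`-solvable by moving pairs
straight to `u`; since every configuration of size `n + 2t` has potential at least `t`, the set
defining `π_t(G, u)` is nonempty and the `sInf` is not the junk value `0`. -/

section Potential

open Classical

variable {V : Type*}

noncomputable def rootWeight (u v : V) (c : ℕ) : ℕ := if v = u then c else c / 2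

lemma rootWeight_self (u : V) (c : ℕ) : rootWeight u u c = c := if_pos rfl

lemma rootWeight_of_ne {u v : V} (h : v ≠ u) (c : ℕ) : rootWeight u v c = c / 2 := if_neg h

variable [Fintype V]

noncomputable def rootPotential (u : V) (C : V → ℕ) : ℕ := ∑ v, rootWeight u v (C v)

lemma sum_add_of_pebMove {C C' : V → ℕ} {x y : V} (hxy : x ≠ y)
    (hC' : ∀ w, C' w = if w = x then C w - 2 else if w = y then C w + 1 else C w)
    (f : V → ℕ → ℕ) :
    ∑ w, f w (C' w) + f x (C x) + f y (C y) = ∑ w, f w (C w) + f x (C x - 2) + f y (C y + 1) := by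
  have pointwise : ∀ w, f w (C' w) + (if w = x then f x (C x) else 0)
        + (if w = y then f y (C y) else 0)
      = f w (C w) + (if w = x then f x (C x - 2) else 0) + (if w = y then f y (C y + 1) else 0) := by
    intro w
    rw [hC' w]
    by_cases hwx : w = x
    · subst hwx; simp [hxy, add_comm]
    · by_cases hwy : w = y
      · subst hwy; simp [hwx, add_comm]
      · simp [hwx, hwy]
  simpa only [Finset.sum_add_distrib, Finset.sum_ite_eq', Finset.mem_univ, if_true] using
    Finset.sum_congr (s₁ := Finset.univ) rfl fun w _ => pointwise w

lemma rootPotential_le_of_pebStep {G : SimpleGraph V} (u : V) {C C' : V → ℕ}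
    (h : PebStep G C C') : rootPotential u C' ≤ rootPotential u C := by
  obtain ⟨x, y, hadj, hx, hC'⟩ := h
  have hsum := sum_add_of_pebMove hadj.ne hC' (rootWeight u)
  have hloss : rootWeight u x (C x - 2) + 1 ≤ rootWeight u x (C x) := by
    unfold rootWeight; split_ifs <;> omega
  have hgain : rootWeight u y (C y + 1) ≤ rootWeight u y (C y) + 1 := by
    unfold rootWeight; split_ifs <;> omega
  unfold rootPotential
  omega

lemma rootPotential_le_of_reflTransGen {G : SimpleGraph V} (u : V) {C C' : V → ℕ}
    (h : Relation.ReflTransGen (PebStep G) C C') : rootPotential u C' ≤ rootPotential u C := by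
  induction h with
  | refl => exact le_rfl
  | tail _ hstep ih => exact (rootPotential_le_of_pebStep u hstep).trans ih

lemma apply_le_rootPotential (u : V) (C : V → ℕ) : C u ≤ rootPotential u C := by
  simpa [rootPotential, rootWeight] using
    Finset.single_le_sum (f := fun v => rootWeight u v (C v)) (fun _ _ => Nat.zero_le _)
      (Finset.mem_univ u)

lemma not_solvable_of_rootPotential_lt (G : SimpleGraph V) {u : V} {C : V → ℕ} {t : ℕ}
    (h : rootPotential u C < t) : ¬ Solvable G C u t := by
  rintro ⟨C', hreach, ht⟩
  have := (apply_le_rootPotential u C').trans (rootPotential_le_of_reflTransGen u hreach)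
  omega

lemma confSize_le_two_mul_rootPotential_add_card (u : V) (C : V → ℕ) :
    confSize C ≤ 2 * rootPotential u C + Fintype.card V := by
  calc confSize C ≤ ∑ v, (2 * rootWeight u v (C v) + 1) :=
        Finset.sum_le_sum fun v _ => by unfold rootWeight; split_ifs <;> omega
    _ = 2 * rootPotential u C + Fintype.card V := by
        simp [Finset.sum_add_distrib, Finset.mul_sum, rootPotential]

lemma two_mul_rootPotential_add_card_of_odd {u : V} {C : V → ℕ} (hCu : C u = 0)
    (hodd : ∀ v, v ≠ u → Odd (C v)) :
    2 * rootPotential u C + Fintype.card V = confSize C + 1 := by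
  have pointwise : ∀ v, C v + (if v = u then 1 else 0) = 2 * rootWeight u v (C v) + 1 := by
    intro v
    unfold rootWeight
    split_ifs with hv
    · subst hv; omega
    · obtain ⟨k, hk⟩ := hodd v hv; omega
  have hsum := Finset.sum_congr rfl fun v (_ : v ∈ Finset.univ) => pointwise v
  simp only [Finset.sum_add_distrib, Finset.sum_ite_eq', Finset.mem_univ, if_true,
    ← Finset.mul_sum, Finset.sum_const, Finset.card_univ, smul_eq_mul, mul_one] at hsum
  rw [confSize, rootPotential, hsum]

lemma exists_two_le_of_apply_lt_rootPotential {u : V} {C : V → ℕ}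
    (h : C u < rootPotential u C) : ∃ v, v ≠ u ∧ 2 ≤ C v := by
  by_contra! hsmall
  have : rootPotential u C ≤ ∑ v, if v = u then C v else 0 :=
    Finset.sum_le_sum fun v _ => by
      unfold rootWeight
      split_ifs with hv
      · exact le_rfl
      · have := hsmall v hv; omega
  simp only [Finset.sum_ite_eq', Finset.mem_univ, if_true] at this
  omega

lemma solvable_of_le_rootPotential {G : SimpleGraph V} {u : V} (hu : _root_.IsUniversal G u)
    {t : ℕ} (C : V → ℕ) (ht : t ≤ rootPotential u C) : Solvable G C u t := by
  induction hN : confSize C using Nat.strong_induction_on generalizing C with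
  | _ N ih =>
  by_cases hCu : t ≤ C u
  · exact ⟨C, .refl, hCu⟩
  obtain ⟨v, hvu, hv⟩ := exists_two_le_of_apply_lt_rootPotential (u := u) (C := C) (by omega)
  -- move one pair from `v` to `u`: the potential is unchanged and the size drops by one
  set C₂ : V → ℕ := fun w => if w = v then C w - 2 else if w = u then C w + 1 else C w
  have hstep : PebStep G C C₂ := ⟨v, u, (hu v hvu).symm, hv, fun _ => rfl⟩
  have hpot := sum_add_of_pebMove hvu (C' := C₂) (fun _ => rfl) (rootWeight u)
  have hsize := sum_add_of_pebMove hvu (C' := C₂) (fun _ => rfl) (fun _ c => c)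
  rw [rootWeight_of_ne hvu, rootWeight_of_ne hvu, rootWeight_self, rootWeight_self] at hpot
  have hpot' : t ≤ rootPotential u C₂ := by unfold rootPotential at ht ⊢; omega
  obtain ⟨C', hreach, ht'⟩ := ih (confSize C₂) (by rw [← hN]; unfold confSize; omega) C₂ hpot' rfl
  exact ⟨C', .head hstep hreach, ht'⟩

lemma solvable_of_card_add_le_confSize {G : SimpleGraph V} {u : V} (hu : _root_.IsUniversal G u)
    {t : ℕ} {C : V → ℕ} (h : Fintype.card V + 2 * t ≤ confSize C) : Solvable G C u t :=
  solvable_of_le_rootPotential hu C (by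
    have := confSize_le_two_mul_rootPotential_add_card u C; omega)

end Potential

lemma confSize_lt_piT_of_not_solvable {V : Type*} [Fintype V] {G : SimpleGraph V} {u : V}
    {t : ℕ} (hbound : ∃ m, ∀ C : V → ℕ, m ≤ confSize C → Solvable G C u t) {C : V → ℕ}
    (hC : ¬ Solvable G C u t) : confSize C < piT G u t :=
  lt_of_not_ge fun hle => hC (Nat.sInf_mem hbound C hle)

theorem odd_config_lower_bound {V : Type*} [Fintype V] (G : SimpleGraph V)
    (u : V) (hu : _root_.IsUniversal G u) (t : ℕ) (C : V → ℕ)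
    (hCu : C u = 0) (hodd : ∀ v, v ≠ u → Odd (C v))
    (hsize : confSize C + 3 = Fintype.card V + 2 * t) :
    ¬ Solvable G C u t ∧ Fintype.card V + 2 * t - 2 ≤ piT G u t := by
  have hpot := two_mul_rootPotential_add_card_of_odd hCu hodd
  have hC : ¬ Solvable G C u t := not_solvable_of_rootPotential_lt G (by omega)
  have hlt := confSize_lt_piT_of_not_solvable
    ⟨_, fun _ => solvable_of_card_add_le_confSize hu⟩ hC
  exact ⟨hC, by omega⟩
end

section
/- Let G be a graph on n vertices with a universal vertex u, and let C be a configuration on G of size at least n + 2t − 2. If C(u) = 0 then pot(C) ≥ t, and if C(u) ≥ 1 then pot(C) ≥ t − 1; in either case C is t-fold u-solvable. -/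
open SimpleGraph

/-!
Every pair of pebbles on a vertex `v ≠ u` can be moved to the universal vertex `u` in one step,
so `u` can collect `C u + ∑_{v ≠ u} ⌊C v / 2⌋` pebbles. Since each vertex holds at most
`2 ⌊C v / 2⌋ + 1` pebbles, and at most `2 ⌊C v / 2⌋` when it is empty, the size bound
`n + 2t - 2` forces enough pairs.
-/

open Finset

section Pebbling

variable {V : Type*} {G : SimpleGraph V}

theorem pebStep_of_adj [DecidableEq V] {C : V → ℕ} {v w : V} (hvw : G.Adj v w) (hv : 2 ≤ C v) :
    PebStep G C (C - Pi.single v 2 + Pi.single w 1) := by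
  refine ⟨v, w, hvw, hv, fun x => ?_⟩
  rcases eq_or_ne x v with rfl | hxv
  · simp [hvw.ne]
  · rcases eq_or_ne x w with rfl | hxw
    · simp [hxv]
    · simp [hxv, hxw]

theorem exists_reflTransGen_move_pairs {v w : V} (hvw : G.Adj v w) :
    ∀ (k : ℕ) (C : V → ℕ), 2 * k ≤ C v →
      ∃ C', Relation.ReflTransGen (PebStep G) C C' ∧ C w + k ≤ C' w ∧ ∀ x ≠ v, C x ≤ C' x := by
  classical
  intro k
  induction k with
  | zero => exact fun C _ => ⟨C, .refl, le_rfl, fun _ _ => le_rfl⟩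
  | succ k ih =>
    intro C hC
    set C₁ := C - Pi.single v 2 + Pi.single w 1
    have hC₁v : C₁ v = C v - 2 := by simp [C₁, hvw.ne]
    have hC₁w : C₁ w = C w + 1 := by simp [C₁, hvw.ne.symm]
    have hC₁x : ∀ x ≠ v, C x ≤ C₁ x := fun x hx => by simp [C₁, hx]
    obtain ⟨C', hreach, hw, hx⟩ := ih C₁ (by omega)
    exact ⟨C', .head (pebStep_of_adj hvw (by omega)) hreach, by omega,
      fun x hxv => (hC₁x x hxv).trans (hx x hxv)⟩

theorem IsUniversal.exists_reflTransGen_gather {u : V} (hu : _root_.IsUniversal G u)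
    (s : Finset V) (hus : u ∉ s) (C : V → ℕ) :
    ∃ C', Relation.ReflTransGen (PebStep G) C C' ∧ C u + ∑ v ∈ s, C v / 2 ≤ C' u := by
  classical
  induction s using Finset.induction_on generalizing C with
  | empty => exact ⟨C, .refl, by simp⟩
  | insert a s has ih =>
    have hau : a ≠ u := fun h => hus (h ▸ mem_insert_self a s)
    obtain ⟨C₁, hreach₁, hu₁, hmono⟩ :=
      exists_reflTransGen_move_pairs (hu a hau).symm (C a / 2) C (Nat.mul_div_le _ _)
    obtain ⟨C', hreach', hu'⟩ := ih (fun h => hus (mem_insert_of_mem h)) C₁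
    have hsum : ∑ v ∈ s, C v / 2 ≤ ∑ v ∈ s, C₁ v / 2 :=
      sum_le_sum fun v hv => Nat.div_le_div_right (hmono v (ne_of_mem_of_not_mem hv has))
    refine ⟨C', hreach₁.trans hreach', ?_⟩
    rw [sum_insert has]
    omega

end Pebbling

theorem confSize_le_two_mul_potential_add_card {V : Type*} [Fintype V] (C : V → ℕ) :
    confSize C ≤ 2 * potential C + #{v | C v ≠ 0} := by
  classical
  calc confSize C ≤ ∑ v, (2 * (C v / 2) + if C v ≠ 0 then 1 else 0) :=
        sum_le_sum fun v _ => by split <;> omega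
    _ = 2 * potential C + #{v | C v ≠ 0} := by
        rw [sum_add_distrib, ← mul_sum, card_filter, potential]

theorem universal_root_solvable {V : Type*} [Fintype V] (G : SimpleGraph V)
    (u : V) (hu : _root_.IsUniversal G u) (t : ℕ) (C : V → ℕ)
    (hsize : Fintype.card V + 2 * t - 2 ≤ confSize C) :
    (C u = 0 → t ≤ potential C) ∧ (1 ≤ C u → t - 1 ≤ potential C) ∧
    Solvable G C u t := by
  classical
  have hcount := confSize_le_two_mul_potential_add_card C
  have hcard : #{v | C v ≠ 0} ≤ Fintype.card V := card_le_univ _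
  have hsplit : potential C = C u / 2 + ∑ v ∈ univ.erase u, C v / 2 :=
    (add_sum_erase _ _ (mem_univ u)).symm
  have hpot₀ : C u = 0 → t ≤ potential C := by
    intro h0
    have : #{v | C v ≠ 0} < Fintype.card V :=
      card_lt_univ_of_notMem (x := u) (by simp [h0])
    omega
  have hpot₁ : 1 ≤ C u → t - 1 ≤ potential C := fun _ => by omega
  refine ⟨hpot₀, hpot₁, ?_⟩
  obtain ⟨C', hreach, hC'⟩ := hu.exists_reflTransGen_gather _ (notMem_erase u univ) C
  refine ⟨C', hreach, ?_⟩
  rcases Nat.eq_zero_or_pos (C u) with h0 | h1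
  · have := hpot₀ h0; omega
  · have := hpot₁ h1; omega
end

section
/- Let r and s be vertices at distance two in a k-connected graph G on n vertices with universal vertex u, and let X be an (r,s)-cutset of size k (necessarily containing u). The configuration F that places 0 pebbles on r and on every vertex of X, 4t−1 pebbles on s, and 1 pebble on every remaining vertex has size n + 4t − k − 3 and is not t-fold r-solvable. -/
open SimpleGraph

/-! Weight argument. A pebble on `X` weighs 2 and a pebble on `r` weighs 4; elsewhere only pairs
of pebbles on a common vertex count, a pair weighing 4 in the component `A` of `r` in `G - X` and
2 outside `A ∪ X`. A pebbling step loses at least as much weight at its source as it gains at its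
target, except when it moves a pebble from outside `A ∪ X` into `A`, and no edge allows that. So
the weight never increases. In `F` only `s` carries pairs, so `F` weighs `2 ⌊(4t - 1)/2⌋ = 4t - 2`,
whereas `t` pebbles on `r` weigh `4t`. The universal vertex lies in `X`, since otherwise
`r - u - s` would avoid `X`. -/

section WeightFunction

variable {V : Type*} [Fintype V] {G : SimpleGraph V}

lemma sum_le_of_pebStep {f : V → ℕ → ℕ}
    (hf : ∀ ⦃a b : V⦄, G.Adj a b → ∀ m n : ℕ, 2 ≤ m →
      f a (m - 2) + f b (n + 1) ≤ f a m + f b n)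
    {C C' : V → ℕ} (h : PebStep G C C') :
    ∑ v, f v (C' v) ≤ ∑ v, f v (C v) := by
  classical
  obtain ⟨a, b, hab, hCa, hC'⟩ := h
  have hsplit (D : V → ℕ) : ∑ v, f v (D v)
      = f a (D a) + f b (D b) + ∑ v ∈ (Finset.univ.erase a).erase b, f v (D v) := by
    rw [← Finset.add_sum_erase _ _ (Finset.mem_univ a),
      ← Finset.add_sum_erase _ _ (Finset.mem_erase.2 ⟨hab.ne.symm, Finset.mem_univ b⟩), add_assoc]
  have hrest : ∀ v ∈ (Finset.univ.erase a).erase b, f v (C' v) = f v (C v) := by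
    intro v hv
    simp only [Finset.mem_erase] at hv
    rw [hC' v, if_neg hv.2.1, if_neg hv.1]
  have ha : C' a = C a - 2 := by simp [hC']
  have hb : C' b = C b + 1 := by simp [hC', hab.ne.symm]
  rw [hsplit C, hsplit C', Finset.sum_congr rfl hrest, ha, hb]
  exact Nat.add_le_add_right (hf hab _ _ hCa) _

lemma sum_le_of_reflTransGen_pebStep {f : V → ℕ → ℕ}
    (hf : ∀ ⦃a b : V⦄, G.Adj a b → ∀ m n : ℕ, 2 ≤ m →
      f a (m - 2) + f b (n + 1) ≤ f a m + f b n)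
    {C C' : V → ℕ} (h : Relation.ReflTransGen (PebStep G) C C') :
    ∑ v, f v (C' v) ≤ ∑ v, f v (C v) := by
  induction h with
  | refl => exact le_rfl
  | tail _ hstep ih => exact (sum_le_of_pebStep hf hstep).trans ih

end WeightFunction

def reachableAvoiding {V : Type*} (G : SimpleGraph V) (X : Set V) (r : V) : Set V :=
  {v | ∃ (hr : r ∉ X) (hv : v ∉ X), (G.induce Xᶜ).Reachable ⟨r, hr⟩ ⟨v, hv⟩}

section Cut

variable {V : Type*} {G : SimpleGraph V}

lemma mem_reachableAvoiding_self {X : Set V} {r : V} (hr : r ∉ X) :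
    r ∈ reachableAvoiding G X r :=
  ⟨hr, hr, .refl _⟩

lemma mem_reachableAvoiding_of_adj {X : Set V} {r : V} ⦃a b : V⦄ (hab : G.Adj a b)
    (ha : a ∈ reachableAvoiding G X r) (hb : b ∉ X) : b ∈ reachableAvoiding G X r := by
  obtain ⟨hr, ha, hreach⟩ := ha
  exact ⟨hr, hb, hreach.trans (Adj.reachable (G := G.induce Xᶜ) hab)⟩

lemma ne_of_not_reachable_induce {X : Set V} {r s : V} {hr : r ∈ Xᶜ} {hs : s ∈ Xᶜ}
    (h : ¬ (G.induce Xᶜ).Reachable ⟨r, hr⟩ ⟨s, hs⟩) : r ≠ s := by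
  rintro rfl
  exact h .rfl

lemma IsUniversal.mem_of_not_reachable {X : Set V} {u r s : V} (hu : _root_.IsUniversal G u)
    (hnadj : ¬ G.Adj r s) (hr : r ∉ X) (hs : s ∉ X)
    (hcut : ¬ (G.induce Xᶜ).Reachable ⟨r, hr⟩ ⟨s, hs⟩) : u ∈ X := by
  have hrs : r ≠ s := ne_of_not_reachable_induce hcut
  by_contra huX
  have hur : u ≠ r := by
    rintro rfl
    exact hnadj (hu s hrs.symm)
  have hus : u ≠ s := by
    rintro rfl
    exact hnadj (hu r hrs).symm
  have hadj₁ : (G.induce Xᶜ).Adj ⟨r, hr⟩ ⟨u, huX⟩ := (hu r hur.symm).symm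
  have hadj₂ : (G.induce Xᶜ).Adj ⟨u, huX⟩ ⟨s, hs⟩ := hu s hus.symm
  exact hcut (hadj₁.reachable.trans hadj₂.reachable)

end Cut

section CutWeight

variable {V : Type*} {G : SimpleGraph V}

open Classical in
noncomputable def cutWeight (X A : Set V) (r v : V) (n : ℕ) : ℕ :=
  if v ∈ X then 2 * n else if v = r then 4 * n else if v ∈ A then 4 * (n / 2) else 2 * (n / 2)

lemma cutWeight_pebStep_le {X A : Set V} {r : V} (hrA : r ∈ A)
    (hA : ∀ ⦃a b⦄, G.Adj a b → a ∈ A → b ∉ X → b ∈ A)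
    ⦃a b : V⦄ (hab : G.Adj a b) (m n : ℕ) (hm : 2 ≤ m) :
    cutWeight X A r a (m - 2) + cutWeight X A r b (n + 1) ≤
      cutWeight X A r a m + cutWeight X A r b n := by
  by_cases hbeyond : a ∉ X ∧ a ∉ A ∧ b ∉ X
  · obtain ⟨haX, haA, hbX⟩ := hbeyond
    have hbA : b ∉ A := fun hbA => haA (hA hab.symm hbA haX)
    have har : a ≠ r := by rintro rfl; exact haA hrA
    have hbr : b ≠ r := by rintro rfl; exact hbA hrA
    simp only [cutWeight, if_neg haX, if_neg haA, if_neg hbX, if_neg hbA, if_neg har, if_neg hbr]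
    omega
  · have hne := hab.ne
    unfold cutWeight
    split_ifs <;> first | omega | simp_all

lemma not_solvable_of_sum_cutWeight_lt [Fintype V] {X A : Set V} {r : V} (hrX : r ∉ X)
    (hrA : r ∈ A) (hA : ∀ ⦃a b⦄, G.Adj a b → a ∈ A → b ∉ X → b ∈ A) {C : V → ℕ} {t : ℕ}
    (hC : ∑ v, cutWeight X A r v (C v) < 4 * t) : ¬ Solvable G C r t := by
  rintro ⟨C', hsteps, ht⟩
  have hr : cutWeight X A r r (C' r) = 4 * C' r := by simp [cutWeight, hrX]
  refine LE.le.not_gt ?_ hC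
  calc
    4 * t ≤ cutWeight X A r r (C' r) := hr ▸ Nat.mul_le_mul_left 4 ht
    _ ≤ ∑ v, cutWeight X A r v (C' v) :=
      Finset.single_le_sum (f := fun v => cutWeight X A r v (C' v)) (by simp) (Finset.mem_univ r)
    _ ≤ ∑ v, cutWeight X A r v (C v) :=
      sum_le_of_reflTransGen_pebStep (cutWeight_pebStep_le hrA hA) hsteps

end CutWeight

section CutsetConfig

variable {V : Type*} [Fintype V]

open Classical in
noncomputable def cutsetConfig (X : Finset V) (r s : V) (t : ℕ) : V → ℕ :=
  fun v => if v = s then 4 * t - 1 else if v = r ∨ v ∈ X then 0 else 1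

open Classical in
lemma confSize_cutsetConfig {X : Finset V} {r s : V} (hrX : r ∉ X) (hsX : s ∉ X) (hrs : r ≠ s)
    (t : ℕ) : confSize (cutsetConfig X r s t) + (X.card + 2) = Fintype.card V + (4 * t - 1) := by
  set T := insert s (insert r X)
  have hT : T.card = X.card + 2 := by
    rw [Finset.card_insert_of_notMem (by simp [hrs.symm, hsX]), Finset.card_insert_of_notMem hrX]
  have hsplit : cutsetConfig X r s t =
      fun v => (if v = s then 4 * t - 1 else 0) + if v ∈ Tᶜ then 1 else 0 := by
    ext v
    by_cases hv : v = s
    · simp [cutsetConfig, T, hv]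
    · simp only [cutsetConfig, T, hv, if_false, Finset.mem_compl, Finset.mem_insert]
      split_ifs <;> simp_all
  rw [confSize, hsplit, Finset.sum_add_distrib, Fintype.sum_ite_eq', Finset.sum_boole,
    Finset.filter_mem_eq_inter, Finset.univ_inter, Nat.cast_id, ← hT, add_assoc,
    Finset.card_compl_add_card, add_comm]

lemma sum_cutWeight_cutsetConfig {X : Finset V} {A : Set V} {r s : V} (hsX : s ∉ X)
    (hsA : s ∉ A) (hrs : r ≠ s) (t : ℕ) :
    ∑ v, cutWeight (↑X) A r v (cutsetConfig X r s t v) = 4 * t - 2 := by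
  rw [Finset.sum_eq_single s]
  · simp only [cutWeight, cutsetConfig, Finset.mem_coe, hsX, hsA, hrs.symm, if_true, if_false]
    omega
  · intro v _ hvs
    unfold cutWeight cutsetConfig
    split_ifs <;> simp_all
  · simp

end CutsetConfig

open Classical in
theorem cutset_config_unsolvable_general {V : Type*} [Fintype V] (G : SimpleGraph V) (k : ℕ)
    (u : V) (hu : _root_.IsUniversal G u) (r s : V)
    (hdist : G.dist r s = 2) (X : Finset V) (hX : X.card = k)
    (hrX : r ∉ X) (hsX : s ∉ X)
    (hcut : ¬ (G.induce ((↑X : Set V)ᶜ)).Reachable ⟨r, hrX⟩ ⟨s, hsX⟩)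
    (t : ℕ) (ht : 1 ≤ t) :
    u ∈ X ∧
    confSize (fun v => if v = s then 4 * t - 1 else if v = r ∨ v ∈ X then 0 else 1)
      = Fintype.card V + 4 * t - k - 3 ∧
    ¬ Solvable G (fun v => if v = s then 4 * t - 1 else if v = r ∨ v ∈ X then 0 else 1) r t := by
  have hrs : r ≠ s := ne_of_not_reachable_induce hcut
  have hnadj : ¬ G.Adj r s := fun h => by simp [dist_eq_one_iff_adj.2 h] at hdist
  have hsA : s ∉ reachableAvoiding G (↑X) r := fun ⟨_, _, h⟩ => hcut h
  have hsize := confSize_cutsetConfig hrX hsX hrs t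
  have hweight := sum_cutWeight_cutsetConfig hsX hsA hrs t
  refine ⟨hu.mem_of_not_reachable hnadj hrX hsX hcut, ?_, ?_⟩
  · change confSize (cutsetConfig X r s t) = _
    omega
  · change ¬ Solvable G (cutsetConfig X r s t) r t
    exact not_solvable_of_sum_cutWeight_lt hrX (mem_reachableAvoiding_self (G := G) hrX)
      mem_reachableAvoiding_of_adj (by omega)

open Classical in
theorem cutset_config_unsolvable {V : Type*} [Fintype V] (G : SimpleGraph V) (k : ℕ)
    (hG : KConnected G k) (u : V) (hu : _root_.IsUniversal G u) (r s : V)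
    (hdist : G.dist r s = 2) (X : Finset V) (hX : X.card = k)
    (hrX : r ∉ X) (hsX : s ∉ X)
    (hcut : ¬ (G.induce ((↑X : Set V)ᶜ)).Reachable ⟨r, hrX⟩ ⟨s, hsX⟩)
    (t : ℕ) (ht : 1 ≤ t) :
    u ∈ X ∧
    confSize (fun v => if v = s then 4 * t - 1 else if v = r ∨ v ∈ X then 0 else 1)
      = Fintype.card V + 4 * t - k - 3 ∧
    ¬ Solvable G (fun v => if v = s then 4 * t - 1 else if v = r ∨ v ∈ X then 0 else 1) r t :=
  cutset_config_unsolvable_general G k u hu r s hdist X hX hrX hsX hcut t ht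
end

section
/- Let T be a star with center u and n leaves, and let r be a leaf of T. Then π_t(T, r) = (n+1) + 4t − 3, i.e., every configuration of size n + 4t − 2 on T is t-fold r-solvable, and some configuration of size n + 4t − 3 is not. -/
/-!
On the star rooted at a leaf `r`, count a pebble on `r` as 2, a pebble on the centre as 1 and a
pair of pebbles on another leaf as 1. No pebbling step increases this potential, and while `r`
carries fewer than `t` pebbles but the potential is at least `2t`, one can either move a pair from
the centre to `r` or a pair from another leaf to the centre without changing it. So `C` is
`t`-fold `r`-solvable exactly when its potential is at least `2t`. A configuration of size
`n + 4t - 2` wastes at most one pebble on each of the `n - 1` other leaves, hence has potential at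
least `2t`; putting `4t - 1` pebbles on one other leaf and one pebble on each remaining leaf
gives size `n + 4t - 3` and potential `2t - 1`.
-/

open SimpleGraph

/-- The star with center `0` and `n` leaves. -/
def starGraph (n : ℕ) : SimpleGraph (Fin (n + 1)) :=
  SimpleGraph.fromRel (fun a _ => a = 0)

open Finset

section Pebbling

variable {V : Type*}

open Classical in
noncomputable def pebbleMove (C : V → ℕ) (u v : V) : V → ℕ :=
  fun w => if w = u then C w - 2 else if w = v then C w + 1 else C w

lemma pebStep_iff {G : SimpleGraph V} {C C' : V → ℕ} :
    PebStep G C C' ↔ ∃ u v, G.Adj u v ∧ 2 ≤ C u ∧ C' = pebbleMove C u v := by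
  simp only [PebStep, pebbleMove, funext_iff]

lemma Solvable.of_pebStep {G : SimpleGraph V} {C C' : V → ℕ} {r : V} {t : ℕ}
    (h : PebStep G C C') (hs : Solvable G C' r t) : Solvable G C r t :=
  let ⟨C'', hC'', ht⟩ := hs
  ⟨C'', .head h hC'', ht⟩

variable [Fintype V]

lemma sum_eq_add_add_sum_compl_pair {M : Type*} [AddCommMonoid M] [DecidableEq V] {u v : V}
    (huv : u ≠ v) (f : V → M) :
    ∑ w, f w = f u + f v + ∑ w ∈ {u, v}ᶜ, f w := by
  rw [← sum_pair huv, sum_add_sum_compl]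

lemma sum_pebbleMove (g : V → ℕ → ℕ) (C : V → ℕ) {u v : V} (huv : u ≠ v) :
    ∑ w, g w (pebbleMove C u v w) + g u (C u) + g v (C v) =
      ∑ w, g w (C w) + g u (C u - 2) + g v (C v + 1) := by
  classical
  have hrest : ∑ w ∈ {u, v}ᶜ, g w (pebbleMove C u v w) = ∑ w ∈ {u, v}ᶜ, g w (C w) :=
    sum_congr rfl fun w hw => by simp_all [pebbleMove]
  rw [sum_eq_add_add_sum_compl_pair huv, sum_eq_add_add_sum_compl_pair huv (fun w => g w (C w)),
    hrest]
  simp only [pebbleMove, ↓reduceIte, huv.symm]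
  ring

lemma PebStep.confSize_lt {G : SimpleGraph V} {C C' : V → ℕ} (h : PebStep G C C') :
    confSize C' < confSize C := by
  obtain ⟨u, v, huv, h2, rfl⟩ := pebStep_iff.mp h
  have := sum_pebbleMove (fun _ x => x) C huv.ne
  simp only [confSize] at this ⊢
  omega

lemma piT_eq_of_solvable_of_not_solvable {G : SimpleGraph V} {r : V} {t m : ℕ}
    (hsolv : ∀ C : V → ℕ, m ≤ confSize C → Solvable G C r t)
    {C₀ : V → ℕ} (hC₀ : confSize C₀ + 1 = m) (hns : ¬ Solvable G C₀ r t) : piT G r t = m :=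
  le_antisymm (Nat.sInf_le hsolv) <| le_csInf ⟨m, hsolv⟩ fun k hk => by
    by_contra! hkm
    exact hns (hk C₀ (by omega))

end Pebbling

namespace StarPebbling

variable {n : ℕ} {r : Fin (n + 1)}

lemma adj_iff {u v : Fin (n + 1)} : (_root_.starGraph n).Adj u v ↔ u ≠ v ∧ (u = 0 ∨ v = 0) := by
  simp [_root_.starGraph]

lemma card_compl_pair (hr : r ≠ 0) : #({r, 0}ᶜ : Finset (Fin (n + 1))) = n - 1 := by
  rw [card_compl, card_pair hr, Fintype.card_fin]
  omega

lemma confSize_eq (hr : r ≠ 0) (C : Fin (n + 1) → ℕ) :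
    confSize C = C r + C 0 + ∑ v ∈ {r, 0}ᶜ, C v :=
  sum_eq_add_add_sum_compl_pair hr C

def rootWeight (r v : Fin (n + 1)) (x : ℕ) : ℕ :=
  if v = r then 2 * x else if v = 0 then x else x / 2

/-- Twice the number of pebbles that can be brought to the leaf `r`. -/
def rootPotential (r : Fin (n + 1)) (C : Fin (n + 1) → ℕ) : ℕ :=
  ∑ v, rootWeight r v (C v)

lemma rootPotential_eq (hr : r ≠ 0) (C : Fin (n + 1) → ℕ) :
    rootPotential r C = 2 * C r + C 0 + ∑ v ∈ {r, 0}ᶜ, C v / 2 := by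
  rw [rootPotential, sum_eq_add_add_sum_compl_pair hr]
  congr 1
  · simp [rootWeight, hr.symm]
  · exact sum_congr rfl fun v hv => by simp_all [rootWeight]

lemma confSize_le_rootPotential (hr : r ≠ 0) (C : Fin (n + 1) → ℕ) :
    confSize C ≤ 2 * rootPotential r C + (n - 1) := by
  have hleaves : ∑ v ∈ {r, 0}ᶜ, C v ≤ 2 * ∑ v ∈ {r, 0}ᶜ, C v / 2 + (n - 1) := by
    rw [mul_sum, ← card_compl_pair hr, card_eq_sum_ones, ← sum_add_distrib]
    exact sum_le_sum fun v _ => by omega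
  rw [confSize_eq hr, rootPotential_eq hr]
  omega

lemma rootWeight_move_le (hr : r ≠ 0) {u v : Fin (n + 1)} (hadj : (_root_.starGraph n).Adj u v)
    {x y : ℕ} (hx : 2 ≤ x) :
    rootWeight r u (x - 2) + rootWeight r v (y + 1) ≤ rootWeight r u x + rootWeight r v y := by
  obtain ⟨huv, rfl | rfl⟩ := adj_iff.mp hadj <;> simp only [rootWeight] <;> split_ifs <;> omega

lemma rootPotential_le_of_pebStep (hr : r ≠ 0) {C C' : Fin (n + 1) → ℕ}
    (h : PebStep (_root_.starGraph n) C C') : rootPotential r C' ≤ rootPotential r C := by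
  obtain ⟨u, v, huv, h2, rfl⟩ := pebStep_iff.mp h
  have := sum_pebbleMove (rootWeight r) C huv.ne
  have := rootWeight_move_le hr huv (y := C v) h2
  simp only [rootPotential] at *
  omega

lemma rootPotential_le_of_reflTransGen (hr : r ≠ 0) {C C' : Fin (n + 1) → ℕ}
    (h : Relation.ReflTransGen (PebStep (_root_.starGraph n)) C C') :
    rootPotential r C' ≤ rootPotential r C := by
  induction h with
  | refl => exact le_rfl
  | tail _ hstep ih => exact (rootPotential_le_of_pebStep hr hstep).trans ih

lemma two_mul_le_rootPotential_of_solvable (hr : r ≠ 0) {C : Fin (n + 1) → ℕ} {t : ℕ}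
    (h : Solvable (_root_.starGraph n) C r t) : 2 * t ≤ rootPotential r C := by
  obtain ⟨C', hC', ht⟩ := h
  have := rootPotential_le_of_reflTransGen hr hC'
  have := rootPotential_eq hr C'
  omega

lemma exists_pebStep_rootPotential_eq (hr : r ≠ 0) {C : Fin (n + 1) → ℕ}
    (h : 2 * C r + 2 ≤ rootPotential r C) :
    ∃ C', PebStep (_root_.starGraph n) C C' ∧ rootPotential r C' = rootPotential r C := by
  rw [rootPotential_eq hr] at h
  by_cases h0 : 2 ≤ C 0
  · refine ⟨pebbleMove C 0 r, pebStep_iff.mpr ⟨0, r, adj_iff.mpr ⟨hr.symm, .inl rfl⟩, h0, rfl⟩, ?_⟩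
    have := sum_pebbleMove (rootWeight r) C hr.symm
    simp only [rootPotential, rootWeight, hr.symm, if_true, if_false] at this ⊢
    omega
  · obtain ⟨v, hv, hv2⟩ : ∃ v ∈ ({r, 0}ᶜ : Finset _), 2 ≤ C v := by
      by_contra! hsmall
      have : ∑ v ∈ {r, 0}ᶜ, C v / 2 = 0 := sum_eq_zero fun v hv => by have := hsmall v hv; omega
      omega
    obtain ⟨hvr, hv0⟩ : v ≠ r ∧ v ≠ 0 := by simpa [not_or] using hv
    refine ⟨pebbleMove C v 0, pebStep_iff.mpr ⟨v, 0, adj_iff.mpr ⟨hv0, .inr rfl⟩, hv2, rfl⟩, ?_⟩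
    have := sum_pebbleMove (rootWeight r) C hv0
    simp only [rootPotential, rootWeight, hvr, hv0, hr.symm, if_true, if_false] at this ⊢
    omega

lemma solvable_of_two_mul_le_rootPotential (hr : r ≠ 0) {t : ℕ} {C : Fin (n + 1) → ℕ}
    (h : 2 * t ≤ rootPotential r C) : Solvable (_root_.starGraph n) C r t := by
  induction hN : confSize C using Nat.strong_induction_on generalizing C with
  | _ N ih =>
    by_cases hCr : t ≤ C r
    · exact ⟨C, .refl, hCr⟩
    obtain ⟨C', hstep, hpot⟩ := exists_pebStep_rootPotential_eq hr (C := C) (by omega)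
    exact Solvable.of_pebStep hstep (ih _ (hN ▸ PebStep.confSize_lt hstep) (hpot ▸ h) rfl)

theorem solvable_iff_two_mul_le_rootPotential (hr : r ≠ 0) {t : ℕ} {C : Fin (n + 1) → ℕ} :
    Solvable (_root_.starGraph n) C r t ↔ 2 * t ≤ rootPotential r C :=
  ⟨two_mul_le_rootPotential_of_solvable hr, solvable_of_two_mul_le_rootPotential hr⟩

def spikeConfig (r v₀ : Fin (n + 1)) (k : ℕ) : Fin (n + 1) → ℕ :=
  fun w => if w = r ∨ w = 0 then 0 else if w = v₀ then k else 1

lemma sum_spikeConfig (hr : r ≠ 0) {v₀ : Fin (n + 1)} (hv₀ : v₀ ∈ ({r, 0}ᶜ : Finset _))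
    (k : ℕ) (f : ℕ → ℕ) :
    ∑ w ∈ {r, 0}ᶜ, f (spikeConfig r v₀ k w) = f k + (n - 2) * f 1 := by
  have hv₀' : ¬(v₀ = r ∨ v₀ = 0) := by simpa using hv₀
  have hrest : ∀ w ∈ ({r, 0}ᶜ : Finset _).erase v₀, f (spikeConfig r v₀ k w) = f 1 :=
    fun w hw => by simp_all [spikeConfig]
  rw [← add_sum_erase _ _ hv₀, sum_congr rfl hrest, sum_const, card_erase_of_mem hv₀,
    card_compl_pair hr, smul_eq_mul, spikeConfig, if_neg hv₀', if_pos rfl]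
  rfl

@[simp]
lemma spikeConfig_root (r v₀ : Fin (n + 1)) (k : ℕ) : spikeConfig r v₀ k r = 0 := by
  simp [spikeConfig]

@[simp]
lemma spikeConfig_zero (r v₀ : Fin (n + 1)) (k : ℕ) : spikeConfig r v₀ k 0 = 0 := by
  simp [spikeConfig]

lemma confSize_spikeConfig (hr : r ≠ 0) {v₀ : Fin (n + 1)} (hv₀ : v₀ ∈ ({r, 0}ᶜ : Finset _))
    (k : ℕ) : confSize (spikeConfig r v₀ k) = k + (n - 2) := by
  rw [confSize_eq hr, sum_spikeConfig hr hv₀ k (fun x => x)]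
  simp

lemma rootPotential_spikeConfig (hr : r ≠ 0) {v₀ : Fin (n + 1)}
    (hv₀ : v₀ ∈ ({r, 0}ᶜ : Finset _)) (k : ℕ) : rootPotential r (spikeConfig r v₀ k) = k / 2 := by
  rw [rootPotential_eq hr, sum_spikeConfig hr hv₀ k (· / 2)]
  simp

end StarPebbling

open StarPebbling in
theorem piT_star {n t : ℕ} (hn : 2 ≤ n) (ht : 1 ≤ t)
    (r : Fin (n + 1)) (hr : r ≠ 0) :
    (∀ C : Fin (n + 1) → ℕ, confSize C = n + 4 * t - 2 → Solvable (_root_.starGraph n) C r t) ∧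
    (∃ C : Fin (n + 1) → ℕ, confSize C = n + 4 * t - 3 ∧ ¬ Solvable (_root_.starGraph n) C r t) ∧
    piT (_root_.starGraph n) r t = (n + 1) + 4 * t - 3 := by
  have hsolv : ∀ C, n + 4 * t - 2 ≤ confSize C → Solvable (_root_.starGraph n) C r t :=
    fun C hC => (solvable_iff_two_mul_le_rootPotential hr).mpr
      (by have := confSize_le_rootPotential hr C; omega)
  obtain ⟨v₀, hv₀⟩ : ({r, 0}ᶜ : Finset (Fin (n + 1))).Nonempty :=
    card_pos.mp (by rw [card_compl_pair hr]; omega)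
  have hsize := confSize_spikeConfig hr hv₀ (4 * t - 1)
  have hns : ¬ Solvable (_root_.starGraph n) (spikeConfig r v₀ (4 * t - 1)) r t := by
    rw [solvable_iff_two_mul_le_rootPotential hr, rootPotential_spikeConfig hr hv₀]
    omega
  refine ⟨fun C hC => hsolv C hC.ge, ⟨_, by omega, hns⟩, ?_⟩
  rw [piT_eq_of_solvable_of_not_solvable hsolv (by omega) hns]
  omega
end

section
/- Let G be a graph on n vertices with a universal vertex and connectivity k, and let r be a root with π_{t−1}(G, r) ≤ m − 4 for some m. If C is a configuration of size m on G in which some vertex has at least 4 pebbles, or two distinct vertices each have at least 2 pebbles, then C is t-fold r-solvable provided a pebble can be moved to r at cost at most 4 (which holds since the universal vertex is adjacent to r). -/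
open SimpleGraph

/-!
Each of the two hypotheses on `C` says that its potential is at least two, i.e. `C` contains two
disjoint pairs of pebbles. These two pairs move one pebble onto `r` in at most three pebbling
steps, routed through the universal vertex `u` if neither pair is next to `r`. That costs at
most four pebbles, so the remaining pebbles still number at least `π_{t-1}(G, r)` and put
`t - 1` more pebbles on `r`. Pebbling is monotone under adding pebbles, so the reserved pebble
on `r` is not disturbed. The same argument, iterated, shows that `π_{t-1}(G, r)` is finite:
a configuration with at least `|V| + 4` pebbles has potential at least two.
-/

open Relation

section Pebbling

variable {V : Type*} {G : SimpleGraph V}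

theorem PebStep.add_left {C C' : V → ℕ} (h : PebStep G C C') (E : V → ℕ) :
    PebStep G (E + C) (E + C') := by
  obtain ⟨a, b, hab, ha, hC'⟩ := h
  refine ⟨a, b, hab, le_add_left ha, fun w => ?_⟩
  have := hC' w
  simp only [Pi.add_apply] at this ⊢
  split_ifs at this ⊢ <;> subst_vars <;> omega

theorem reflTransGen_pebStep_add_left {C C' : V → ℕ} (h : ReflTransGen (PebStep G) C C')
    (E : V → ℕ) : ReflTransGen (PebStep G) (E + C) (E + C') :=
  h.lift (E + ·) fun _ _ hs => hs.add_left E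

variable [DecidableEq V]

theorem pebStep_single {a b : V} (h : G.Adj a b) :
    PebStep G (Pi.single a 2) (Pi.single b 1) := by
  refine ⟨a, b, h, by simp, fun w => ?_⟩
  rcases eq_or_ne w a with rfl | hwa
  · simp [h.ne]
  · rcases eq_or_ne w b with rfl | hwb <;> simp [*]

theorem reflTransGen_add_single_two {a b : V} (h : G.Adj a b) (E : V → ℕ) :
    ReflTransGen (PebStep G) (E + Pi.single a 2) (E + Pi.single b 1) :=
  .single ((pebStep_single h).add_left E)

theorem reflTransGen_add_single_two_add_single_two {x y u r : V} (hx : G.Adj x u)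
    (hy : G.Adj y u) (hu : G.Adj u r) (D : V → ℕ) :
    ReflTransGen (PebStep G) (D + Pi.single x 2 + Pi.single y 2) (D + Pi.single r 1) := by
  have merge : D + Pi.single u 1 + Pi.single u 1 = D + Pi.single u 2 := by
    rw [add_assoc, ← Pi.single_add]
  rw [add_right_comm]
  refine (reflTransGen_add_single_two hx _).trans ?_
  rw [add_right_comm]
  refine (reflTransGen_add_single_two hy _).trans ?_
  rw [merge]
  exact reflTransGen_add_single_two hu D

theorem Solvable.of_reflTransGen_add_single {C D : V → ℕ} {r : V} {t : ℕ}
    (hD : Solvable G D r t) (hC : ReflTransGen (PebStep G) C (D + Pi.single r 1)) :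
    Solvable G C r (t + 1) := by
  obtain ⟨D', hD', ht⟩ := hD
  refine ⟨D' + Pi.single r 1, hC.trans ?_, by simpa⟩
  simpa only [add_comm _ (Pi.single r 1)] using reflTransGen_pebStep_add_left hD' _

theorem sub_single_add_single {C : V → ℕ} {a : V} {n : ℕ} (h : n ≤ C a) :
    C - Pi.single a n + Pi.single a n = C := by
  funext w
  rcases eq_or_ne w a with rfl | hwa
  · simpa using Nat.sub_add_cancel h
  · simp [hwa]

end Pebbling

section Potential

variable {V : Type*} [Fintype V]

@[simp]
theorem confSize_add (C D : V → ℕ) : confSize (C + D) = confSize C + confSize D :=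
  Finset.sum_add_distrib

@[simp]
theorem confSize_single [DecidableEq V] (a : V) (n : ℕ) : confSize (Pi.single a n) = n := by
  simp [confSize]

theorem confSize_le_card_add_two_mul_potential (C : V → ℕ) :
    confSize C ≤ Fintype.card V + 2 * potential C := by
  calc confSize C ≤ ∑ v, (1 + 2 * (C v / 2)) := Finset.sum_le_sum fun v _ => by omega
    _ = Fintype.card V + 2 * potential C := by
      simp [Finset.sum_add_distrib, Finset.mul_sum, potential]

theorem potential_add_single_two [DecidableEq V] (D : V → ℕ) (a : V) :
    potential (D + Pi.single a 2) = potential D + 1 := by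
  have h : ∀ v, (D + Pi.single a 2 : V → ℕ) v / 2 = D v / 2 + (Pi.single a 1 : V → ℕ) v := by
    intro v
    rcases eq_or_ne v a with rfl | hva
    · simp
    · simp [hva]
  simp only [potential, h, Finset.sum_add_distrib]
  simp

theorem exists_eq_add_single_two_of_pos_potential [DecidableEq V] {C : V → ℕ}
    (h : 0 < potential C) : ∃ (D : V → ℕ) (a : V), C = D + Pi.single a 2 := by
  obtain ⟨a, -, ha⟩ := Finset.exists_ne_zero_of_sum_ne_zero h.ne'
  exact ⟨C - Pi.single a 2, a, (sub_single_add_single (by omega)).symm⟩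

theorem two_le_potential {C : V → ℕ}
    (h : (∃ v, 4 ≤ C v) ∨ ∃ v w, v ≠ w ∧ 2 ≤ C v ∧ 2 ≤ C w) : 2 ≤ potential C := by
  classical
  rcases h with ⟨v, hv⟩ | ⟨v, w, hvw, hv, hw⟩
  · calc 2 ≤ C v / 2 := by omega
      _ ≤ potential C := Finset.single_le_sum (f := fun x => C x / 2) (fun _ _ => Nat.zero_le _)
        (Finset.mem_univ v)
  · calc 2 ≤ ∑ x ∈ {v, w}, C x / 2 := by rw [Finset.sum_pair hvw]; omega
      _ ≤ potential C := Finset.sum_le_sum_of_subset (Finset.subset_univ _)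

theorem exists_eq_add_single_two_add_single_two [DecidableEq V] {C : V → ℕ}
    (h : 2 ≤ potential C) :
    ∃ (D : V → ℕ) (a b : V), C = D + Pi.single a 2 + Pi.single b 2 := by
  obtain ⟨C', b, rfl⟩ := exists_eq_add_single_two_of_pos_potential (by omega : 0 < potential C)
  rw [potential_add_single_two] at h
  obtain ⟨D, a, rfl⟩ := exists_eq_add_single_two_of_pos_potential (by omega : 0 < potential C')
  exact ⟨D, a, b, rfl⟩

end Potential

section Universal

variable {V : Type*} [Fintype V] [DecidableEq V] {G : SimpleGraph V} {u : V}

theorem IsUniversal.exists_reflTransGen_add_single (hu : _root_.IsUniversal G u) (r : V)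
    (D : V → ℕ) (x y : V) :
    ∃ D', ReflTransGen (PebStep G) (D + Pi.single x 2 + Pi.single y 2) (D' + Pi.single r 1) ∧
      confSize (D + Pi.single x 2 + Pi.single y 2) ≤ confSize D' + 4 := by
  set C := D + Pi.single x 2 + Pi.single y 2
  by_cases hr : 1 ≤ C r
  · exact ⟨C - Pi.single r 1, by rw [sub_single_add_single hr], by
      conv_lhs => rw [← sub_single_add_single hr]
      simp⟩
  have hxr : x ≠ r := by rintro rfl; simp [C] at hr
  have hyr : y ≠ r := by rintro rfl; simp [C] at hr
  have from_neighbor : ∀ a (E : V → ℕ), G.Adj a r → C = E + Pi.single a 2 →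
      ∃ D', ReflTransGen (PebStep G) C (D' + Pi.single r 1) ∧ confSize C ≤ confSize D' + 4 := by
    intro a E hadj hE
    rw [hE]
    exact ⟨E, reflTransGen_add_single_two hadj E, by simp⟩
  by_cases hru : r = u
  · subst hru
    exact from_neighbor x (D + Pi.single y 2) (hu x hxr).symm (add_right_comm _ _ _)
  by_cases hxu : x = u
  · subst hxu
    exact from_neighbor x (D + Pi.single y 2) (hu r hru) (add_right_comm _ _ _)
  by_cases hyu : y = u
  · subst hyu
    exact from_neighbor y (D + Pi.single x 2) (hu r hru) rfl
  exact ⟨D, reflTransGen_add_single_two_add_single_two (hu x hxu).symm (hu y hyu).symm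
    (hu r hru) D, by simp [C]⟩

theorem IsUniversal.solvable_of_four_mul_add_card_le (hu : _root_.IsUniversal G u) (r : V)
    (t : ℕ) (C : V → ℕ) (hC : 4 * t + Fintype.card V ≤ confSize C) : Solvable G C r t := by
  induction t generalizing C with
  | zero => exact ⟨C, .refl, Nat.zero_le _⟩
  | succ t ih =>
    have hpot := confSize_le_card_add_two_mul_potential C
    obtain ⟨D, x, y, rfl⟩ := exists_eq_add_single_two_add_single_two (by omega : 2 ≤ potential C)
    obtain ⟨D', hreach, hcost⟩ := hu.exists_reflTransGen_add_single r D x y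
    exact (ih D' (by omega)).of_reflTransGen_add_single hreach

-- `piT` is an `sInf`, which would be `0` if no size guaranteed solvability.
theorem IsUniversal.solvable_of_piT_le (hu : _root_.IsUniversal G u) {r : V} {t : ℕ}
    {C : V → ℕ} (hC : piT G r t ≤ confSize C) : Solvable G C r t :=
  Nat.sInf_mem (s := {m | ∀ C : V → ℕ, m ≤ confSize C → Solvable G C r t})
    ⟨_, hu.solvable_of_four_mul_add_card_le r t⟩ C hC

end Universal

theorem cheap_solution_induction {V : Type*} [Fintype V] (G : SimpleGraph V)
    (u : V) (hu : _root_.IsUniversal G u) (r : V) (t m : ℕ) (ht : 1 ≤ t)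
    (hpi : piT G r (t - 1) + 4 ≤ m) (C : V → ℕ) (hsize : confSize C = m)
    (hbig : (∃ v, 4 ≤ C v) ∨ (∃ v w, v ≠ w ∧ 2 ≤ C v ∧ 2 ≤ C w)) :
    Solvable G C r t := by
  classical
  obtain ⟨D, x, y, rfl⟩ := exists_eq_add_single_two_add_single_two (two_le_potential hbig)
  obtain ⟨D', hreach, hcost⟩ := hu.exists_reflTransGen_add_single r D x y
  obtain ⟨s, rfl⟩ : ∃ s, t = s + 1 := ⟨t - 1, by omega⟩
  rw [Nat.add_sub_cancel] at hpi
  exact (hu.solvable_of_piT_le (by omega)).of_reflTransGen_add_single hreach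
end
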